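/- Let H : {(x,t) ∈ ℝ² : x ≤ t} → ℝ be continuous and suppose there is a decreasing integrable function σ on [a,∞) with |H(x,t)| ≤ σ((x+t)/2) for a ≤ x ≤ t. Define F(x,t) = H(x,t) + ∫_t^∞ H(x,ξ) H(t,ξ) dξ for x ≤ t and F(x,t) = H(t,x) + ∫_x^∞ H(x,ξ) H(t,ξ) dξ for t ≤ x. Then F is symmetric and real-valued, and satisfies |F(x,t)| ≤ σ((x+t)/2) + σ((x+t)/2) · ∫_{(x+t)/2}^∞ σ(u) du · C for some constant C depending only on σ (in particular F is bounded by a function of (x+t)/2 that is decreasing and integrable at +∞). -/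

import Mathlib

/-!
For `a ≤ x ≤ t` and `ξ > t`, antitonicity of `σ` gives `|H x ξ| ≤ σ ((x + t) / 2)`, while
`|H t ξ| ≤ σ ((t + ξ) / 2)`. The substitution `u = (t + ξ) / 2` turns the integral of the latter
over `ξ > t` into `2 ∫_t^∞ σ ≤ 2 ∫_{(x+t)/2}^∞ σ`, so `C = 2` works; the case `t ≤ x` follows by
symmetry, which is immediate from the two formulas for `F`.
-/

open MeasureTheory Set

lemma indicator_Ioi_comp_midpoint {M : Type*} [Zero M] (f : ℝ → M) (c : ℝ) :
    (Ioi c).indicator (fun ξ => f ((c + ξ) / 2)) =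
      fun ξ => (Ioi c).indicator f ((c + ξ) / 2) := by
  have hpre : (fun ξ : ℝ => (c + ξ) / 2) ⁻¹' Ioi c = Ioi c := by
    ext ξ
    simp only [mem_preimage, mem_Ioi]
    constructor <;> intro h <;> linarith
  ext ξ
  rw [← indicator_comp_right (fun ξ : ℝ => (c + ξ) / 2), hpre]
  rfl

lemma MeasureTheory.IntegrableOn.comp_Ioi_midpoint {E : Type*} [NormedAddCommGroup E]
    {f : ℝ → E} {c : ℝ} (hf : IntegrableOn f (Ioi c)) :
    IntegrableOn (fun ξ => f ((c + ξ) / 2)) (Ioi c) := by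
  rw [← integrable_indicator_iff measurableSet_Ioi, indicator_Ioi_comp_midpoint]
  exact (((integrable_indicator_iff measurableSet_Ioi).2 hf).comp_div two_ne_zero).comp_add_left c

lemma integral_Ioi_comp_midpoint {E : Type*} [NormedAddCommGroup E] [NormedSpace ℝ E]
    (f : ℝ → E) (c : ℝ) :
    ∫ ξ in Ioi c, f ((c + ξ) / 2) = (2 : ℝ) • ∫ u in Ioi c, f u := by
  rw [← integral_indicator measurableSet_Ioi, ← integral_indicator measurableSet_Ioi,
    indicator_Ioi_comp_midpoint, integral_add_left_eq_self (fun y => (Ioi c).indicator f (y / 2)),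
    Measure.integral_comp_div, abs_two]

lemma abs_integral_Ioi_mul_le {a : ℝ} {H : ℝ → ℝ → ℝ} {σ : ℝ → ℝ}
    (hσ_anti : AntitoneOn σ (Ici a)) (hσ_int : IntegrableOn σ (Ici a))
    (hH_bound : ∀ x t, a ≤ x → x ≤ t → |H x t| ≤ σ ((x + t) / 2))
    {x t : ℝ} (hax : a ≤ x) (hxt : x ≤ t) :
    |∫ ξ in Ioi t, H x ξ * H t ξ| ≤
      σ ((x + t) / 2) * (∫ u in Ioi ((x + t) / 2), σ u) * 2 := by
  set m := (x + t) / 2 with hm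
  have hat : a ≤ t := hax.trans hxt
  have ham : a ≤ m := by rw [hm]; linarith
  have hσ_nonneg : ∀ s, a ≤ s → 0 ≤ σ s := fun s hs => by
    simpa using (abs_nonneg _).trans (hH_bound s s hs le_rfl)
  -- `(x + ξ) / 2 ≥ m`, so antitonicity bounds the first factor by a constant.
  have hpt : ∀ ξ ∈ Ioi t, ‖H x ξ * H t ξ‖ ≤ σ m * σ ((t + ξ) / 2) := by
    intro ξ (htξ : t < ξ)
    have hx : |H x ξ| ≤ σ m :=
      (hH_bound x ξ hax (by linarith)).trans
        (hσ_anti ham (show a ≤ (x + ξ) / 2 by linarith) (by rw [hm]; linarith))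
    rw [Real.norm_eq_abs, abs_mul]
    exact mul_le_mul hx (hH_bound t ξ hat htξ.le) (abs_nonneg _) (hσ_nonneg m ham)
  have hσ_tail : ∫ u in Ioi t, σ u ≤ ∫ u in Ioi m, σ u :=
    setIntegral_mono_set (hσ_int.mono_set (Ioi_subset_Ici ham))
      (ae_restrict_of_forall_mem measurableSet_Ioi fun u (hu : m < u) =>
        hσ_nonneg u (by linarith))
      (Filter.Eventually.of_forall (Ioi_subset_Ioi (by rw [hm]; linarith)))
  calc |∫ ξ in Ioi t, H x ξ * H t ξ|
      ≤ ∫ ξ in Ioi t, σ m * σ ((t + ξ) / 2) :=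
        norm_integral_le_of_norm_le
          (((hσ_int.mono_set (Ioi_subset_Ici hat)).comp_Ioi_midpoint).const_mul _)
          (ae_restrict_of_forall_mem measurableSet_Ioi hpt)
    _ = σ m * (2 * ∫ u in Ioi t, σ u) := by
        rw [integral_const_mul, integral_Ioi_comp_midpoint, smul_eq_mul]
    _ ≤ σ m * (2 * ∫ u in Ioi m, σ u) := by
        gcongr
        exact hσ_nonneg m ham
    _ = σ m * (∫ u in Ioi m, σ u) * 2 := by ring

theorem F_symmetric_and_bounded_general
    (a : ℝ) (H : ℝ → ℝ → ℝ) (σ : ℝ → ℝ)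
    (hσ_anti : AntitoneOn σ (Set.Ici a))
    (hσ_int : IntegrableOn σ (Set.Ici a))
    (hH_bound : ∀ x t, a ≤ x → x ≤ t → |H x t| ≤ σ ((x + t) / 2))
    (F : ℝ → ℝ → ℝ)
    (hF1 : ∀ x t, x ≤ t → F x t = H x t + ∫ ξ in Set.Ioi t, H x ξ * H t ξ)
    (hF2 : ∀ x t, t ≤ x → F x t = H t x + ∫ ξ in Set.Ioi x, H x ξ * H t ξ) :
    (∀ x t, F x t = F t x) ∧
      ∃ C : ℝ, 0 ≤ C ∧ ∀ x t, a ≤ x → a ≤ t →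
        |F x t| ≤ σ ((x + t) / 2) +
          σ ((x + t) / 2) * (∫ u in Set.Ioi ((x + t) / 2), σ u) * C := by
  have hsymm : ∀ x t, F x t = F t x := by
    intro x t
    rcases le_total x t with h | h
    · simp only [hF1 x t h, hF2 t x h, mul_comm]
    · simp only [hF2 x t h, hF1 t x h, mul_comm]
  have hbound : ∀ x t, a ≤ x → x ≤ t → |F x t| ≤ σ ((x + t) / 2) +
      σ ((x + t) / 2) * (∫ u in Ioi ((x + t) / 2), σ u) * 2 := fun x t hax hxt => by
    rw [hF1 x t hxt]
    exact (abs_add_le _ _).trans <| add_le_add (hH_bound x t hax hxt)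
      (abs_integral_Ioi_mul_le hσ_anti hσ_int hH_bound hax hxt)
  refine ⟨hsymm, 2, zero_le_two, fun x t hax hat => ?_⟩
  rcases le_total x t with h | h
  · exact hbound x t hax h
  · rw [hsymm, add_comm x t]
    exact hbound t x hat h

theorem F_symmetric_and_bounded
    (a : ℝ) (H : ℝ → ℝ → ℝ) (σ : ℝ → ℝ)
    (hσ_anti : AntitoneOn σ (Set.Ici a))
    (hσ_int : IntegrableOn σ (Set.Ici a))
    (hH_cont : ContinuousOn (fun p : ℝ × ℝ => H p.1 p.2) {p : ℝ × ℝ | p.1 ≤ p.2})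
    (hH_bound : ∀ x t, a ≤ x → x ≤ t → |H x t| ≤ σ ((x + t) / 2))
    (F : ℝ → ℝ → ℝ)
    (hF1 : ∀ x t, x ≤ t → F x t = H x t + ∫ ξ in Set.Ioi t, H x ξ * H t ξ)
    (hF2 : ∀ x t, t ≤ x → F x t = H t x + ∫ ξ in Set.Ioi x, H x ξ * H t ξ) :
    (∀ x t, F x t = F t x) ∧
      ∃ C : ℝ, 0 ≤ C ∧ ∀ x t, a ≤ x → a ≤ t →
        |F x t| ≤ σ ((x + t) / 2) +
          σ ((x + t) / 2) * (∫ u in Set.Ioi ((x + t) / 2), σ u) * C :=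
  F_symmetric_and_bounded_general a H σ hσ_anti hσ_int hH_bound F hF1 hF2
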